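/- Firing Squad corollary: Let G be a set of agents and, for each i ∈ G, let fire_i be an action for agent i such that the family {fire_i}_{i∈G} is necessarily simultaneous in the system R (for all i,j ∈ G, fire_i is a necessary condition for fire_j in R) and each fire_i is a conscious action for i in R. Let ψ_go be a fact that is a necessary condition for fire_i in R for every i ∈ G (ψ_go represents 'a go message has been received by some agent in G'). Then common knowledge of ψ_go among G is a necessary condition for every fire_i: for every j ∈ G and every nonempty sequence i_1,...,i_m of agents from G, K_{i_1}···K_{i_m} ψ_go is a necessary condition for fire_j in R. -/

import Mathlib

/-- Agent `i`'s knowledge operator in system `R` with local-state map `loc`. -/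
def K {Agent LState Run : Type*} (R : Set Run) (loc : Run → ℕ → Agent → LState)
    (i : Agent) (φ : Run → ℕ → Prop) : Run → ℕ → Prop :=
  fun r t => ∀ r' ∈ R, ∀ t' : ℕ, loc r' t' i = loc r t i → φ r' t'

/-- `ψ` is a necessary condition for the action `does` in system `R`. -/
def NecessaryFor {Run : Type*} (R : Set Run) (ψ does : Run → ℕ → Prop) : Prop :=
  ∀ r ∈ R, ∀ t : ℕ, does r t → ψ r t

/-- `does` is a conscious action for agent `i` in system `R`. -/
def Conscious {Agent LState Run : Type*} (R : Set Run) (loc : Run → ℕ → Agent → LState)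
    (i : Agent) (does : Run → ℕ → Prop) : Prop :=
  ∀ r ∈ R, ∀ r' ∈ R, ∀ t t' : ℕ, loc r t i = loc r' t' i → (does r t ↔ does r' t')

/-- The nested-knowledge fact `K_{i₁} K_{i₂} ⋯ K_{iₘ} ψ` for a list `[i₁,…,iₘ]`. -/
def Knest {Agent LState Run : Type*} (R : Set Run) (loc : Run → ℕ → Agent → LState)
    (l : List Agent) (ψ : Run → ℕ → Prop) : Run → ℕ → Prop :=
  l.foldr (fun i φ => K R loc i φ) ψ

/-!
Whenever agent `i` performs a conscious action, it performs it at every point it cannot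
distinguish from the current one, so every necessary condition of the action is known to `i`
whenever it acts. Simultaneity makes every condition necessary for one `fire i` necessary for all
of them, so if `φ` is necessary for every `fire j` then so is `K i φ`; induct on the list.
-/

theorem NecessaryFor.trans {Run : Type*} {R : Set Run} {ψ φ does : Run → ℕ → Prop}
    (hψ : NecessaryFor R ψ φ) (hφ : NecessaryFor R φ does) : NecessaryFor R ψ does :=
  fun r hr t h => hψ r hr t (hφ r hr t h)

theorem Conscious.necessaryFor_K {Agent LState Run : Type*} {R : Set Run}
    {loc : Run → ℕ → Agent → LState} {i : Agent} {ψ does : Run → ℕ → Prop}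
    (hc : Conscious R loc i does) (h : NecessaryFor R ψ does) :
    NecessaryFor R (K R loc i ψ) does :=
  fun r hr t hdoes r' hr' t' hloc => h r' hr' t' ((hc r hr r' hr' t t' hloc.symm).mp hdoes)

theorem Knest_cons {Agent LState Run : Type*} (R : Set Run) (loc : Run → ℕ → Agent → LState)
    (i : Agent) (l : List Agent) (ψ : Run → ℕ → Prop) :
    Knest R loc (i :: l) ψ = K R loc i (Knest R loc l ψ) :=
  rfl

theorem necessaryFor_Knest {Agent LState Run : Type*} {R : Set Run}
    {loc : Run → ℕ → Agent → LState} {G : Set Agent} {fire : Agent → Run → ℕ → Prop}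
    {ψ : Run → ℕ → Prop}
    (hsimul : ∀ i ∈ G, ∀ j ∈ G, NecessaryFor R (fire i) (fire j))
    (hconscious : ∀ i ∈ G, Conscious R loc i (fire i))
    (hnec : ∀ i ∈ G, NecessaryFor R ψ (fire i)) :
    ∀ l : List Agent, (∀ a ∈ l, a ∈ G) →
      ∀ j ∈ G, NecessaryFor R (Knest R loc l ψ) (fire j)
  | [], _, j, hj => hnec j hj
  | i :: l, hl, j, hj => by
    have hi : i ∈ G := hl i List.mem_cons_self
    have hfire_i : NecessaryFor R (Knest R loc l ψ) (fire i) :=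
      necessaryFor_Knest hsimul hconscious hnec l
        (fun a ha => hl a (List.mem_cons_of_mem i ha)) i hi
    rw [Knest_cons]
    exact ((hconscious i hi).necessaryFor_K hfire_i).trans (hsimul i hi j hj)

/-- Firing Squad corollary: common knowledge of `ψ_go` is a necessary condition
for every firing action. -/
theorem firing_squad {Agent LState Run : Type*}
    (R : Set Run) (loc : Run → ℕ → Agent → LState)
    (G : Set Agent) (fire : Agent → Run → ℕ → Prop) (ψ_go : Run → ℕ → Prop)
    (hsimul : ∀ i ∈ G, ∀ j ∈ G, NecessaryFor R (fire i) (fire j))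
    (hconscious : ∀ i ∈ G, Conscious R loc i (fire i))
    (hnec : ∀ i ∈ G, NecessaryFor R ψ_go (fire i)) :
    ∀ j ∈ G, ∀ l : List Agent, l ≠ [] → (∀ a ∈ l, a ∈ G) →
      NecessaryFor R (Knest R loc l ψ_go) (fire j) :=
  fun j hj l _ hl => necessaryFor_Knest hsimul hconscious hnec l hl j hj
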